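/- For the split-signature metric g = dx dw + dy dz + y² dw² + Σ_{i=5}^n ε_i du_i² on ℝⁿ (ε_i = ±1), the vector fields ∂_x, ∂_z, ∂_w, ∂_y − 2yw∂_x + w²∂_z, y∂_x − w∂_z, (z + yw²)∂_x − w∂_y − (w³/3)∂_z, x∂_z − y∂_w + (2y³/3)∂_x are Killing fields. -/

import Mathlib

noncomputable section

open scoped BigOperators

/-- Partial derivative of a scalar function on `ℝⁿ` in the `i`-th coordinate direction. -/
def pd {n : ℕ} (i : Fin n) (f : (Fin n → ℝ) → ℝ) (x : Fin n → ℝ) : ℝ :=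
  fderiv ℝ f x (Pi.single i 1)

/-- The `m`-th coordinate of a point of `ℝⁿ` (junk value `0` if `m ≥ n`). -/
def co {n : ℕ} (m : ℕ) (x : Fin n → ℝ) : ℝ :=
  if h : m < n then x ⟨m, h⟩ else 0

/-- Christoffel symbols `Γ^k_{ij} = ½ g^{kl}(∂_i g_{jl} + ∂_j g_{il} − ∂_l g_{ij})`
of a metric given as a matrix-valued function. -/
def christoffel {n : ℕ} (g : (Fin n → ℝ) → Matrix (Fin n) (Fin n) ℝ)
    (k i j : Fin n) (x : Fin n → ℝ) : ℝ :=
  (1/2) * ∑ l, (g x)⁻¹ k l *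
    (pd i (fun y => g y j l) x + pd j (fun y => g y i l) x - pd l (fun y => g y i j) x)

/-- Curvature tensor `R^i_{jkl}` of a torsion-free connection with Christoffel symbols `Γ`. -/
def curvature {n : ℕ} (Γ : Fin n → Fin n → Fin n → (Fin n → ℝ) → ℝ)
    (i j k l : Fin n) (x : Fin n → ℝ) : ℝ :=
  pd k (Γ i l j) x - pd l (Γ i k j) x +
    ∑ s, (Γ i k s x * Γ s l j x - Γ i l s x * Γ s k j x)

/-- Ricci tensor `Ric_{jl} = R^i_{jil}`. -/
def ricci {n : ℕ} (Γ : Fin n → Fin n → Fin n → (Fin n → ℝ) → ℝ)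
    (j l : Fin n) (x : Fin n → ℝ) : ℝ :=
  ∑ i, curvature Γ i j i l x

/-- Lie derivative `(L_v g)_{ij} = v^k ∂_k g_{ij} + g_{kj} ∂_i v^k + g_{ik} ∂_j v^k`. -/
def lieMetric {n : ℕ} (v : Fin n → (Fin n → ℝ) → ℝ)
    (g : (Fin n → ℝ) → Matrix (Fin n) (Fin n) ℝ) (i j : Fin n) (x : Fin n → ℝ) : ℝ :=
  ∑ k, (v k x * pd k (fun y => g y i j) x
        + g x k j * pd i (v k) x + g x i k * pd j (v k) x)

/-- Lie derivative `(L_v Γ)^k_{ij}` of a torsion-free connection along a vector field `v`. -/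
def lieConn {n : ℕ} (v : Fin n → (Fin n → ℝ) → ℝ)
    (Γ : Fin n → Fin n → Fin n → (Fin n → ℝ) → ℝ)
    (k i j : Fin n) (x : Fin n → ℝ) : ℝ :=
  pd i (fun y => pd j (v k) y) x +
    ∑ s, (v s x * pd s (Γ k i j) x + Γ k s j x * pd i (v s) x
          + Γ k i s x * pd j (v s) x - Γ s i j x * pd s (v k) x)

/-- A vector field with smooth components. -/
def SmoothVF {n : ℕ} (v : Fin n → (Fin n → ℝ) → ℝ) : Prop :=
  ∀ k, ContDiff ℝ (⊤ : ℕ∞) (v k)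

/-- `v` is a projective vector field of `g`: the Lie derivative of the Levi-Civita
connection along `v` is of the form `δ^k_i φ_j + δ^k_j φ_i` for some 1-form `φ`
(the standard characterization of projective fields). -/
def IsProjectiveField {n : ℕ} (g : (Fin n → ℝ) → Matrix (Fin n) (Fin n) ℝ)
    (v : Fin n → (Fin n → ℝ) → ℝ) : Prop :=
  ∃ φ : Fin n → (Fin n → ℝ) → ℝ, ∀ k i j x,
    lieConn v (christoffel g) k i j x =
      (if k = i then φ j x else 0) + (if k = j then φ i x else 0)

/-- The set of (smooth) projective vector fields of `g`: the projective algebra `𝔭(g)`. -/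
def ProjSet {n : ℕ} (g : (Fin n → ℝ) → Matrix (Fin n) (Fin n) ℝ) :
    Set (Fin n → (Fin n → ℝ) → ℝ) :=
  {v | SmoothVF v ∧ IsProjectiveField g v}

/-- The set of (smooth) Killing fields of `g`: the isometry algebra `I(g)`. -/
def KillSet {n : ℕ} (g : (Fin n → ℝ) → Matrix (Fin n) (Fin n) ℝ) :
    Set (Fin n → (Fin n → ℝ) → ℝ) :=
  {v | SmoothVF v ∧ ∀ i j x, lieMetric v g i j x = 0}

/-- The set of (smooth) homothety fields of `g` (`L_v g = λ·g`, `λ` constant):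
the homothety algebra `H(g)`. -/
def HomSet {n : ℕ} (g : (Fin n → ℝ) → Matrix (Fin n) (Fin n) ℝ) :
    Set (Fin n → (Fin n → ℝ) → ℝ) :=
  {v | SmoothVF v ∧ ∃ c : ℝ, ∀ i j x, lieMetric v g i j x = c * g x i j}

/-- The split-signature pp-wave metric `g = dx dw + dy dz + y²dw² + Σ_{i≥5} ε_i du_i²`
on ℝⁿ in coordinates `(x,y,z,w,u₅,…,u_n)` indexed `0,1,2,3,4,…,n−1`
(symmetric products: `dx dw = ½(dx⊗dw + dw⊗dx)` etc.). -/
def gSplit (n : ℕ) (ε : Fin n → ℝ) (x : Fin n → ℝ) : Matrix (Fin n) (Fin n) ℝ :=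
  fun i j =>
    if ((i : ℕ) = 0 ∧ (j : ℕ) = 3) ∨ ((i : ℕ) = 3 ∧ (j : ℕ) = 0) then 1/2
    else if ((i : ℕ) = 1 ∧ (j : ℕ) = 2) ∨ ((i : ℕ) = 2 ∧ (j : ℕ) = 1) then 1/2
    else if (i : ℕ) = 3 ∧ (j : ℕ) = 3 then (co 1 x)^2
    else if i = j ∧ 4 ≤ (i : ℕ) then ε i
    else 0

/- AUX LEMMAS -/
section KillingAux
variable {n : ℕ}

lemma pd_const (i : Fin n) (c : ℝ) (x : Fin n → ℝ) : pd i (fun _ => c) x = 0 := by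
  simp [pd]

lemma diff_co (m : ℕ) : Differentiable ℝ (co (n := n) m) := by
  by_cases hm : m < n
  · have h : (co (n := n) m) = fun y => y ⟨m, hm⟩ := by funext y; simp [co, hm]
    rw [h]
    exact (ContinuousLinearMap.proj (R := ℝ) (φ := fun _ : Fin n => ℝ) ⟨m, hm⟩).differentiable
  · have h : (co (n := n) m) = fun _ => 0 := by funext y; simp [co, hm]
    rw [h]; exact differentiable_const 0

/-- Kronecker delta-ish symbol. -/
def dl {n : ℕ} (m : ℕ) (i : Fin n) : ℝ := if (i : ℕ) = m then 1 else 0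

lemma pd_co {m : ℕ} (hm : m < n) (i : Fin n) (x : Fin n → ℝ) :
    pd i (co m) x = dl m i := by
  have h : (co (n := n) m) = fun y => y ⟨m, hm⟩ := by funext y; simp [co, hm]
  rw [pd, h]
  have h2 : fderiv ℝ (fun y : Fin n → ℝ => y ⟨m, hm⟩) x
      = ContinuousLinearMap.proj (R := ℝ) (φ := fun _ : Fin n => ℝ) ⟨m, hm⟩ :=
    (ContinuousLinearMap.proj (R := ℝ) (φ := fun _ : Fin n => ℝ) ⟨m, hm⟩).fderiv
  rw [h2]
  simp [dl, Pi.single_apply, Fin.ext_iff, eq_comm]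

lemma pd_add (i : Fin n) {f g : (Fin n → ℝ) → ℝ} {x : Fin n → ℝ}
    (hf : DifferentiableAt ℝ f x) (hg : DifferentiableAt ℝ g x) :
    pd i (fun y => f y + g y) x = pd i f x + pd i g x := by
  simp [pd, fderiv_fun_add hf hg]

lemma pd_mul (i : Fin n) {f g : (Fin n → ℝ) → ℝ} {x : Fin n → ℝ}
    (hf : DifferentiableAt ℝ f x) (hg : DifferentiableAt ℝ g x) :
    pd i (fun y => f y * g y) x = f x * pd i g x + g x * pd i f x := by
  simp [pd, fderiv_fun_mul hf hg]

lemma pd_cmul (i : Fin n) (c : ℝ) {f : (Fin n → ℝ) → ℝ} {x : Fin n → ℝ}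
    (hf : DifferentiableAt ℝ f x) :
    pd i (fun y => c * f y) x = c * pd i f x := by
  simp [pd, fderiv_const_mul hf]

lemma pd_neg (i : Fin n) {f : (Fin n → ℝ) → ℝ} {x : Fin n → ℝ} :
    pd i (fun y => -f y) x = -pd i f x := by
  simp [pd, fderiv_neg]

lemma sum4 (hn : 4 ≤ n) (F : Fin n → ℝ) (h : ∀ k : Fin n, 4 ≤ (k : ℕ) → F k = 0) :
    ∑ k, F k = F ⟨0, by omega⟩ + F ⟨1, by omega⟩ + F ⟨2, by omega⟩ + F ⟨3, by omega⟩ := by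
  classical
  have hsub : ({⟨0, by omega⟩, ⟨1, by omega⟩, ⟨2, by omega⟩, ⟨3, by omega⟩} : Finset (Fin n))
      ⊆ Finset.univ := Finset.subset_univ _
  rw [← Finset.sum_subset hsub (fun k _ hk => by
    apply h
    simp only [Finset.mem_insert, Finset.mem_singleton, Fin.ext_iff] at hk
    omega)]
  rw [Finset.sum_insert (by simp [Fin.ext_iff]), Finset.sum_insert (by simp [Fin.ext_iff]),
    Finset.sum_insert (by simp [Fin.ext_iff]), Finset.sum_singleton]
  ring

section rows
variable (hn : 4 ≤ n) (ε : Fin n → ℝ) (x : Fin n → ℝ) (j : Fin n)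
include hn

lemma grow0 : gSplit n ε x ⟨0, by omega⟩ j = (1/2) * dl 3 j := by
  simp only [gSplit, dl, Fin.ext_iff]
  norm_num
  all_goals split_ifs <;> first | (exfalso; omega) | norm_num
lemma grow1 : gSplit n ε x ⟨1, by omega⟩ j = (1/2) * dl 2 j := by
  simp only [gSplit, dl, Fin.ext_iff]
  norm_num
  all_goals split_ifs <;> first | (exfalso; omega) | norm_num
lemma grow2 : gSplit n ε x ⟨2, by omega⟩ j = (1/2) * dl 1 j := by
  simp only [gSplit, dl, Fin.ext_iff]
  norm_num
  all_goals split_ifs <;> first | (exfalso; omega) | norm_num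
lemma grow3 : gSplit n ε x ⟨3, by omega⟩ j = (1/2) * dl 0 j + (co 1 x)^2 * dl 3 j := by
  simp only [gSplit, dl, Fin.ext_iff]
  norm_num
  all_goals split_ifs <;> first | (exfalso; omega) | norm_num
lemma gcol0 : gSplit n ε x j ⟨0, by omega⟩ = (1/2) * dl 3 j := by
  simp only [gSplit, dl, Fin.ext_iff]
  norm_num
  all_goals split_ifs <;> first | (exfalso; omega) | norm_num
lemma gcol1 : gSplit n ε x j ⟨1, by omega⟩ = (1/2) * dl 2 j := by
  simp only [gSplit, dl, Fin.ext_iff]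
  norm_num
  all_goals split_ifs <;> first | (exfalso; omega) | norm_num
lemma gcol2 : gSplit n ε x j ⟨2, by omega⟩ = (1/2) * dl 1 j := by
  simp only [gSplit, dl, Fin.ext_iff]
  norm_num
  all_goals split_ifs <;> first | (exfalso; omega) | norm_num
lemma gcol3 : gSplit n ε x j ⟨3, by omega⟩ = (1/2) * dl 0 j + (co 1 x)^2 * dl 3 j := by
  simp only [gSplit, dl, Fin.ext_iff]
  norm_num
  all_goals split_ifs <;> first | (exfalso; omega) | norm_num
end rows

lemma pd_gij (hn : 4 ≤ n) (ε : Fin n → ℝ) (k i j : Fin n) (x : Fin n → ℝ) :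
    pd k (fun y => gSplit n ε y i j) x = 2 * co 1 x * dl 3 i * dl 3 j * dl 1 k := by
  have h1n : (1 : ℕ) < n := by omega
  by_cases hij : (i : ℕ) = 3 ∧ (j : ℕ) = 3
  · have hf : (fun y => gSplit n ε y i j) = fun y => co 1 y * co 1 y := by
      funext y
      simp only [gSplit, hij.1, hij.2]
      norm_num [sq]
    rw [hf, pd_mul k ((diff_co 1).differentiableAt) ((diff_co 1).differentiableAt),
      pd_co h1n]
    simp [dl, hij.1, hij.2]
    split_ifs <;> ring
  · have hf : (fun y => gSplit n ε y i j) = fun _ => gSplit n ε x i j := by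
      funext y
      simp only [gSplit]
      split_ifs with h1 h2 h3 h4 <;> first | rfl | (exact absurd h3 hij)
    rw [hf, pd_const]
    rcases not_and_or.mp hij with h | h
    · have : dl 3 i = 0 := by simp [dl, h]
      rw [this]; ring
    · have : dl 3 j = 0 := by simp [dl, h]
      rw [this]; ring

lemma killing_calc (hn : 4 ≤ n) (ε : Fin n → ℝ)
    (v : Fin n → (Fin n → ℝ) → ℝ)
    (hv : ∀ k : Fin n, 4 ≤ (k : ℕ) → v k = fun _ => 0)
    (i j : Fin n) (x : Fin n → ℝ) :
    lieMetric v (gSplit n ε) i j x =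
      v ⟨1, by omega⟩ x * (2 * co 1 x * dl 3 i * dl 3 j)
      + (1/2) * dl 3 j * pd i (v ⟨0, by omega⟩) x
      + (1/2) * dl 2 j * pd i (v ⟨1, by omega⟩) x
      + (1/2) * dl 1 j * pd i (v ⟨2, by omega⟩) x
      + ((1/2) * dl 0 j + (co 1 x)^2 * dl 3 j) * pd i (v ⟨3, by omega⟩) x
      + (1/2) * dl 3 i * pd j (v ⟨0, by omega⟩) x
      + (1/2) * dl 2 i * pd j (v ⟨1, by omega⟩) x
      + (1/2) * dl 1 i * pd j (v ⟨2, by omega⟩) x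
      + ((1/2) * dl 0 i + (co 1 x)^2 * dl 3 i) * pd j (v ⟨3, by omega⟩) x := by
  rw [lieMetric, sum4 hn _ (fun k hk => by simp [hv k hk, pd_const])]
  beta_reduce
  rw [pd_gij hn, pd_gij hn, pd_gij hn, pd_gij hn,
    grow0 hn, grow1 hn, grow2 hn, grow3 hn, gcol0 hn, gcol1 hn, gcol2 hn, gcol3 hn]
  have d10 : dl 1 (⟨0, by omega⟩ : Fin n) = 0 := by simp [dl]
  have d11 : dl 1 (⟨1, by omega⟩ : Fin n) = 1 := by simp [dl]
  have d12 : dl 1 (⟨2, by omega⟩ : Fin n) = 0 := by simp [dl]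
  have d13 : dl 1 (⟨3, by omega⟩ : Fin n) = 0 := by simp [dl]
  rw [d10, d11, d12, d13]
  ring

end KillingAux

section pdP
variable {n : ℕ} (i : Fin n) (x : Fin n → ℝ)

lemma pdP1 (h1 : 1 < n) (h3 : 3 < n) :
    pd i (fun x => -(2 * co 1 x * co 3 x)) x = -(2 * (co 1 x * dl 3 i + co 3 x * dl 1 i)) := by
  have e : (fun x : Fin n → ℝ => -(2 * co 1 x * co 3 x))
      = fun x => (-2 : ℝ) * (co 1 x * co 3 x) := by funext y; ring
  rw [e, pd_cmul i (-2) (((diff_co 1).differentiableAt).fun_mul ((diff_co 3).differentiableAt)),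
    pd_mul i ((diff_co 1).differentiableAt) ((diff_co 3).differentiableAt), pd_co h1, pd_co h3]
  ring

lemma pdP2 (h3 : 3 < n) : pd i (fun x => co 3 x ^ 2) x = 2 * co 3 x * dl 3 i := by
  have e : (fun x : Fin n → ℝ => co 3 x ^ 2) = fun x => co 3 x * co 3 x := by funext y; ring
  rw [e, pd_mul i ((diff_co 3).differentiableAt) ((diff_co 3).differentiableAt), pd_co h3]
  ring

lemma pdP3 (h3 : 3 < n) : pd i (fun x => -co 3 x) x = -dl 3 i := by
  rw [show (fun x : Fin n → ℝ => -co 3 x) = fun x => -(co 3 x) from rfl,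
    pd_neg i (f := co 3), pd_co h3]

lemma pdP4 (h1 : 1 < n) (h2 : 2 < n) (h3 : 3 < n) :
    pd i (fun x => co 2 x + co 1 x * co 3 x ^ 2) x
      = dl 2 i + co 3 x ^ 2 * dl 1 i + 2 * co 1 x * co 3 x * dl 3 i := by
  have e : (fun x : Fin n → ℝ => co 2 x + co 1 x * co 3 x ^ 2)
      = fun x => co 2 x + co 1 x * (co 3 x * co 3 x) := by funext y; ring
  rw [e, pd_add i ((diff_co 2).differentiableAt)
      (((diff_co 1).differentiableAt).fun_mul (((diff_co 3).differentiableAt).fun_mul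
        ((diff_co 3).differentiableAt))),
    pd_mul i ((diff_co 1).differentiableAt)
      (((diff_co 3).differentiableAt).fun_mul ((diff_co 3).differentiableAt)),
    pd_mul i ((diff_co 3).differentiableAt) ((diff_co 3).differentiableAt),
    pd_co h1, pd_co h2, pd_co h3]
  ring

lemma pdP5 (h3 : 3 < n) : pd i (fun x => -co 3 x ^ 3 / 3) x = -(co 3 x ^ 2 * dl 3 i) := by
  have e : (fun x : Fin n → ℝ => -co 3 x ^ 3 / 3)
      = fun x => (-1/3 : ℝ) * (co 3 x * (co 3 x * co 3 x)) := by funext y; ring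
  rw [e, pd_cmul i (-1/3) (((diff_co 3).differentiableAt).fun_mul
      (((diff_co 3).differentiableAt).fun_mul ((diff_co 3).differentiableAt))),
    pd_mul i ((diff_co 3).differentiableAt)
      (((diff_co 3).differentiableAt).fun_mul ((diff_co 3).differentiableAt)),
    pd_mul i ((diff_co 3).differentiableAt) ((diff_co 3).differentiableAt), pd_co h3]
  ring

lemma pdP6 (h1 : 1 < n) : pd i (fun x => 2 * co 1 x ^ 3 / 3) x = 2 * co 1 x ^ 2 * dl 1 i := by
  have e : (fun x : Fin n → ℝ => 2 * co 1 x ^ 3 / 3)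
      = fun x => (2/3 : ℝ) * (co 1 x * (co 1 x * co 1 x)) := by funext y; ring
  rw [e, pd_cmul i (2/3) (((diff_co 1).differentiableAt).fun_mul
      (((diff_co 1).differentiableAt).fun_mul ((diff_co 1).differentiableAt))),
    pd_mul i ((diff_co 1).differentiableAt)
      (((diff_co 1).differentiableAt).fun_mul ((diff_co 1).differentiableAt)),
    pd_mul i ((diff_co 1).differentiableAt) ((diff_co 1).differentiableAt), pd_co h1]
  ring

lemma pdP7 (h1 : 1 < n) : pd i (fun x => -co 1 x) x = -dl 1 i := by
  rw [show (fun x : Fin n → ℝ => -co 1 x) = fun x => -(co 1 x) from rfl,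
    pd_neg i (f := co 1), pd_co h1]

lemma pdP8 (h0 : 0 < n) : pd i (fun x => co 0 x) x = dl 0 i := pd_co h0 i x

lemma pdP9 (h1 : 1 < n) : pd i (fun x => co 1 x) x = dl 1 i := pd_co h1 i x

end pdP

/-- the seven listed vector fields are Killing fields of the
split-signature metric `g = dx dw + dy dz + y²dw² + Σ ε_i du_i²`. -/
theorem gSplit_killing_fields {n : ℕ} (hn : 4 ≤ n) (ε : Fin n → ℝ)
    (hε : ∀ i : Fin n, 4 ≤ (i : ℕ) → ε i = 1 ∨ ε i = -1) :
    ∀ v ∈ ({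
      -- ∂_x
      fun (k : Fin n) (_ : Fin n → ℝ) => if (k : ℕ) = 0 then (1:ℝ) else 0,
      -- ∂_z
      fun (k : Fin n) (_ : Fin n → ℝ) => if (k : ℕ) = 2 then (1:ℝ) else 0,
      -- ∂_w
      fun (k : Fin n) (_ : Fin n → ℝ) => if (k : ℕ) = 3 then (1:ℝ) else 0,
      -- ∂_y − 2yw∂_x + w²∂_z
      fun (k : Fin n) (x : Fin n → ℝ) => if (k : ℕ) = 1 then (1:ℝ)
        else if (k : ℕ) = 0 then -2 * co 1 x * co 3 x
        else if (k : ℕ) = 2 then (co 3 x)^2 else 0,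
      -- y∂_x − w∂_z
      fun (k : Fin n) (x : Fin n → ℝ) => if (k : ℕ) = 0 then co 1 x
        else if (k : ℕ) = 2 then -(co 3 x) else 0,
      -- (z + yw²)∂_x − w∂_y − (w³/3)∂_z
      fun (k : Fin n) (x : Fin n → ℝ) => if (k : ℕ) = 0 then co 2 x + co 1 x * (co 3 x)^2
        else if (k : ℕ) = 1 then -(co 3 x)
        else if (k : ℕ) = 2 then -(co 3 x)^3 / 3 else 0,
      -- x∂_z − y∂_w + (2y³/3)∂_x
      fun (k : Fin n) (x : Fin n → ℝ) => if (k : ℕ) = 2 then co 0 x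
        else if (k : ℕ) = 3 then -(co 1 x)
        else if (k : ℕ) = 0 then 2 * (co 1 x)^3 / 3 else 0} :
      Set (Fin n → (Fin n → ℝ) → ℝ)),
    ∀ (i j : Fin n) (x : Fin n → ℝ), lieMetric v (gSplit n ε) i j x = 0 := by
  intro v hv
  simp only [Set.mem_insert_iff, Set.mem_singleton_iff] at hv
  have h0n : (0:ℕ) < n := by omega
  have h1n : (1:ℕ) < n := by omega
  have h2n : (2:ℕ) < n := by omega
  have h3n : (3:ℕ) < n := by omega
  rcases hv with rfl | rfl | rfl | rfl | rfl | rfl | rfl <;> intro i j x <;>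
    rw [killing_calc hn ε _ (fun k hk => by
      funext y
      simp [show ¬((k:ℕ)=0) from by omega, show ¬((k:ℕ)=1) from by omega,
            show ¬((k:ℕ)=2) from by omega, show ¬((k:ℕ)=3) from by omega]) i j x] <;>
    beta_reduce <;> norm_num <;>
    simp only [pd_const, pdP1 i x h1n h3n, pdP1 j x h1n h3n, pdP2 i x h3n, pdP2 j x h3n,
      pdP3 i x h3n, pdP3 j x h3n, pdP4 i x h1n h2n h3n, pdP4 j x h1n h2n h3n,
      pdP5 i x h3n, pdP5 j x h3n, pdP6 i x h1n, pdP6 j x h1n, pdP7 i x h1n, pdP7 j x h1n,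
      pdP8 i x h0n, pdP8 j x h0n, pdP9 i x h1n, pdP9 j x h1n] <;>
    ring
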